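/- arXiv:1710.06049 — 3 statements merged into one kernel-verified Lean document; each statement's English description precedes it below -/
import Mathlib

section
/- (Walsh's formula) For natural numbers m and λ, the number s(m,λ) of doubly surjective functions from Fin m to Fin λ satisfies s(m,λ) = ∑_{j=0}^{λ} (-1)^j · C(λ,j) · ∑_{i=0}^{j} C(j,i) · (m!/(m-i)!) · (λ-j)^{m-i}, where the inner terms with i > m are taken to be zero. -/
/-!
Inclusion–exclusion over the set `S` of colours hit at most once gives
`s(m, λ) = ∑_S (-1)^|S| N(S)`, where `N(S)` counts the maps hitting every colour of `S` at most
once. Such a map is determined by the set `T` of positions it sends into `S`, an injection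
`T ↪ S`, and an arbitrary map from the remaining positions to the `λ - |S|` remaining colours,
so `N(S) = ∑_i C(m, i) |S|^(i) (λ - |S|)^(m - i)` with falling factorials `x^(i)`. Walsh's form
follows from `C(m, i) j^(i) = C(j, i) m^(i)`.
-/

open Finset

/-- The set of "matching" positions of `f`: positions `i` such that some other
position `j ≠ i` has the same color, `f j = f i`. -/
def matchingSet {k n : ℕ} (f : Fin k → Fin n) : Finset (Fin k) :=
  Finset.univ.filter (fun i => ∃ j, j ≠ i ∧ f j = f i)

/-- The set of "repeat" positions of `f`: positions `i` such that some earlier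
position `j < i` has the same color, `f j = f i`. -/
def repeatSet {k n : ℕ} (f : Fin k → Fin n) : Finset (Fin k) :=
  Finset.univ.filter (fun i => ∃ j, j < i ∧ f j = f i)

/-- The set of "repeated" colors of `f`: colors used by at least two positions. -/
def repeatedColors {k n : ℕ} (f : Fin k → Fin n) : Finset (Fin n) :=
  Finset.univ.filter (fun c => 2 ≤ (Finset.univ.filter (fun i => f i = c)).card)

/-- `Z k n m l` is the number of sequences of `k` balls colored with at most `n`
colors having exactly `m` matching positions and exactly `l` repeated colors. -/
def Z (k n m l : ℕ) : ℕ :=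
  Fintype.card {f : Fin k → Fin n // (matchingSet f).card = m ∧ (repeatedColors f).card = l}

/-- `dsurj m l` is the number of doubly surjective functions `Fin m → Fin l`,
i.e. functions for which every element of `Fin l` has at least two preimages. -/
def dsurj (m l : ℕ) : ℕ :=
  Fintype.card {g : Fin m → Fin l // ∀ c : Fin l, 2 ≤ (Finset.univ.filter (fun i => g i = c)).card}

open Function

variable {ι α β γ : Type*}

theorem card_filter_forall_not_eq_sum_neg_one_pow [Fintype ι] [Fintype β] [DecidableEq β]
    (P : ι → β → Prop) [∀ x c, Decidable (P x c)] :
    (#{x | ∀ c, ¬ P x c} : ℤ) = ∑ S : Finset β, (-1 : ℤ) ^ #S * #{x | ∀ c ∈ S, P x c} := by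
  have indicator (x : ι) : (if ∀ c, ¬ P x c then 1 else 0 : ℤ) =
      ∑ S : Finset β, if ∀ c ∈ S, P x c then (-1) ^ #S else 0 := by
    have : ({S | ∀ c ∈ S, P x c} : Finset (Finset β)) = ({c | P x c} : Finset β).powerset := by
      ext S; simp [subset_iff]
    rw [← sum_filter, this, sum_powerset_neg_one_pow_card]
    simp [filter_eq_empty_iff]
  simp only [card_filter, Nat.cast_sum, Nat.cast_ite, Nat.cast_one, Nat.cast_zero, mul_sum,
    mul_ite, mul_one, mul_zero]
  rw [sum_congr rfl fun x _ => indicator x, sum_comm]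

theorem sum_univ_finset_apply_card {M : Type*} [AddCommMonoid M] [Fintype β] (g : ℕ → M) :
    ∑ S : Finset β, g #S = ∑ j ∈ range (Fintype.card β + 1), (Fintype.card β).choose j • g j := by
  rw [← powerset_univ, sum_powerset_apply_card, card_univ]

theorem forall_card_fiber_le_one_iff_injOn [Fintype α] [DecidableEq β] (f : α → β) (S : Finset β) :
    (∀ c ∈ S, #{a | f a = c} ≤ 1) ↔ Set.InjOn f (f ⁻¹' S) := by
  simp only [card_le_one, mem_filter, mem_univ, true_and, Set.InjOn, Set.mem_preimage, mem_coe]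
  constructor
  · intro h a ha b _ hab
    exact h _ ha a rfl b hab.symm
  · rintro h c hc a rfl b hb
    exact h hc (hb ▸ hc) hb.symm

def subtypeInjectiveEquivEmbeddingSubtype (p : β → Prop) :
    {g : γ → β // Injective g ∧ ∀ x, p (g x)} ≃ (γ ↪ Subtype p) where
  toFun g := ⟨fun x => ⟨g.1 x, g.2.2 x⟩, fun _ _ h => g.2.1 (congrArg Subtype.val h)⟩
  invFun e := ⟨fun x => e x, Subtype.val_injective.comp e.injective, fun x => (e x).2⟩

-- Choose the `i` positions sent (injectively) into the `j` colours; the rest avoid them.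
def countAtMostOnceOn (m n j : ℕ) : ℕ :=
  ∑ i ∈ range (m + 1), m.choose i * (j.descFactorial i * (n - j) ^ (m - i))

theorem sum_range_choose_mul_of_le (g : ℕ → ℕ) {n N : ℕ} (h : n ≤ N) :
    ∑ i ∈ range (n + 1), n.choose i * g i = ∑ i ∈ range (N + 1), n.choose i * g i :=
  sum_subset (range_subset_range.mpr (by omega)) fun i _ hi => by
    rw [Nat.choose_eq_zero_of_lt (by simpa using hi), zero_mul]

theorem countAtMostOnceOn_eq_sum_choose (m n j : ℕ) :
    countAtMostOnceOn m n j =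
      ∑ i ∈ range (j + 1), j.choose i * (m.descFactorial i * (n - j) ^ (m - i)) := by
  rw [countAtMostOnceOn, sum_range_choose_mul_of_le _ (Nat.le_add_right m j),
    sum_range_choose_mul_of_le _ (Nat.le_add_left j m)]
  refine sum_congr rfl fun i _ => ?_
  rw [Nat.descFactorial_eq_factorial_mul_choose, Nat.descFactorial_eq_factorial_mul_choose]
  ring

theorem cast_descFactorial_eq_ite (m i : ℕ) :
    (m.descFactorial i : ℤ) = if i ≤ m then ((m.factorial / (m - i).factorial : ℕ) : ℤ) else 0 := by
  split_ifs with h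
  · rw [Nat.descFactorial_eq_div h]
  · rw [Nat.descFactorial_eq_zero_iff_lt.mpr (by omega), Nat.cast_zero]

variable [Fintype α] [DecidableEq α] [Fintype β] [DecidableEq β]

theorem card_injOn_and_preimage_eq (S : Finset β) (T : Finset α) :
    #{f : α → β | Set.InjOn f T ∧ ∀ a, f a ∈ S ↔ a ∈ T} =
      (#S).descFactorial #T * (Fintype.card β - #S) ^ (Fintype.card α - #T) := by
  let e := Equiv.piEquivPiSubtypeProd (· ∈ T) (fun _ => β)
  have split (f : α → β) : (Set.InjOn f T ∧ ∀ a, f a ∈ S ↔ a ∈ T) ↔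
      (Injective (e f).1 ∧ ∀ x, (e f).1 x ∈ S) ∧ ∀ x, (e f).2 x ∉ S := by
    simp only [e, Equiv.piEquivPiSubtypeProd_apply, Subtype.forall, Set.injOn_iff_injective,
      and_assoc]
    refine and_congr Iff.rfl ⟨fun h => ⟨fun a ha => (h a).2 ha, fun a ha hS => ha ((h a).1 hS)⟩,
      fun h a => ⟨fun hS => by_contra fun ha => h.2 a ha hS, h.1 a⟩⟩
  rw [← Fintype.card_subtype, Fintype.card_congr ((Equiv.subtypeEquiv e split).trans
      (Equiv.subtypeProdEquivProd (p := fun g : T → β => Injective g ∧ ∀ x, g x ∈ S)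
        (q := fun h => ∀ x, h x ∉ S))), Fintype.card_prod,
    Fintype.card_congr (subtypeInjectiveEquivEmbeddingSubtype (· ∈ S)),
    Fintype.card_congr (Equiv.subtypePiEquivPi (p := fun _ b => b ∉ S)),
    Fintype.card_embedding_eq, Fintype.card_fun]
  simp [Fintype.card_subtype_compl]

theorem card_forall_card_fiber_le_one_eq (S : Finset β) :
    #{f : α → β | ∀ c ∈ S, #{a | f a = c} ≤ 1} =
      countAtMostOnceOn (Fintype.card α) (Fintype.card β) #S := by
  have fiber (T : Finset α) :
      #{f ∈ ({f | ∀ c ∈ S, #{a | f a = c} ≤ 1} : Finset (α → β)) |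
          ({a | f a ∈ S} : Finset α) = T} =
        #{f : α → β | Set.InjOn f T ∧ ∀ a, f a ∈ S ↔ a ∈ T} := by
    rw [filter_filter]
    refine congrArg card (filter_congr fun f _ => ?_)
    have preimage_eq : ({a | f a ∈ S} : Finset α) = T ↔ ∀ a, f a ∈ S ↔ a ∈ T := by
      simp [Finset.ext_iff]
    rw [forall_card_fiber_le_one_iff_injOn, preimage_eq]
    exact and_congr_left fun h => by rw [show f ⁻¹' S = T from Set.ext h]
  rw [card_eq_sum_card_fiberwise (f := fun f => ({a | f a ∈ S} : Finset α)) (t := univ)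
      fun _ _ => mem_univ _, sum_congr rfl fun T _ => fiber T]
  simp_rw [card_injOn_and_preimage_eq]
  rw [sum_univ_finset_apply_card fun i =>
    (#S).descFactorial i * (Fintype.card β - #S) ^ (Fintype.card α - i)]
  simp only [smul_eq_mul, countAtMostOnceOn]

theorem natCard_forall_two_le_card_fiber_eq_sum :
    (Nat.card {f : α → β // ∀ c, 2 ≤ #{a | f a = c}} : ℤ) =
      ∑ j ∈ range (Fintype.card β + 1), (-1 : ℤ) ^ j * (Fintype.card β).choose j *
        countAtMostOnceOn (Fintype.card α) (Fintype.card β) j := by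
  have two_le_iff (n : ℕ) : 2 ≤ n ↔ ¬ n ≤ 1 := by omega
  simp_rw [two_le_iff]
  rw [Nat.card_eq_fintype_card, Fintype.card_subtype, card_filter_forall_not_eq_sum_neg_one_pow]
  simp_rw [card_forall_card_fiber_le_one_eq]
  rw [sum_univ_finset_apply_card fun j =>
    (-1 : ℤ) ^ j * countAtMostOnceOn (Fintype.card α) (Fintype.card β) j]
  simp only [nsmul_eq_mul, mul_assoc, mul_left_comm]

/-- Walsh's formula: the number of doubly surjective functions
`Fin m → Fin l` equals
`∑_{j=0}^{l} (-1)^j C(l,j) ∑_{i=0}^{j} C(j,i) (m!/(m-i)!) (l-j)^{m-i}`,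
where the inner terms with `i > m` are taken to be zero. -/
theorem stmt6 (m l : ℕ) :
    (dsurj m l : ℤ) =
      ∑ j ∈ Finset.range (l + 1), (-1 : ℤ) ^ j * (Nat.choose l j : ℤ) *
        ∑ i ∈ Finset.range (j + 1),
          (if i ≤ m then
            (Nat.choose j i : ℤ) * ((Nat.factorial m / Nat.factorial (m - i) : ℕ) : ℤ) *
              (((l - j : ℕ) : ℤ)) ^ (m - i)
          else 0) := by
  rw [dsurj, ← Nat.card_eq_fintype_card, natCard_forall_two_le_card_fiber_eq_sum, Fintype.card_fin,
    Fintype.card_fin]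
  refine sum_congr rfl fun j _ => ?_
  rw [countAtMostOnceOn_eq_sum_choose, Nat.cast_sum]
  congr 1
  refine sum_congr rfl fun i _ => ?_
  rw [Nat.cast_mul, Nat.cast_mul, Nat.cast_pow, cast_descFactorial_eq_ite]
  split_ifs <;> ring
end

section
/- Let k, n, m, λ be natural numbers with m ≥ k - n + 1, λ ≤ ⌊m/2⌋, and λ ≤ n - k + m (in particular k ≤ n + m - λ so that n - λ + m - k ≥ 0). Then Z(k,n,m,λ) = C(n,λ) · C(k,m) · ((n-λ)!/((n-λ+m-k)!)) · s(m,λ). -/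
open Finset

/-!
A coloring `f` is determined by its set `M` of matching positions, its set `L` of repeated
colors, and its restrictions to `M` and to `Mᶜ`. A position is matching exactly when its color
is repeated, so `f` maps `M` into `L` and `Mᶜ` into `Lᶜ`; on `M` it is a doubly surjective map
onto `L`, and on `Mᶜ` it is injective. Conversely any such pair of maps glues to a coloring with
data `(M, L)`. Hence each of the `C(k,m) · C(n,l)` choices of `(M, L)` carries
`s(m,l) · (n-l)(n-l-1)⋯(n-l-(k-m)+1)` colorings, and when `l + k ≤ n + m` this falling
factorial is `(n-l)!/(n-l+m-k)!`.
-/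

open Function

section DoublySurjective

variable {α β γ δ : Type*} [Fintype α] [Fintype γ] [DecidableEq β] [DecidableEq δ]

def IsDoublySurjective (g : α → β) : Prop :=
  ∀ c, 2 ≤ #{a | g a = c}

instance [Fintype β] : DecidablePred (IsDoublySurjective : (α → β) → Prop) :=
  fun g => inferInstanceAs (Decidable (∀ c, 2 ≤ #{a | g a = c}))

theorem isDoublySurjective_arrowCongr_iff (e : α ≃ γ) (e' : β ≃ δ) (g : α → β) :
    IsDoublySurjective (e.arrowCongr e' g) ↔ IsDoublySurjective g := by
  have hfiber (c : β) : #{a | e.arrowCongr e' g a = e' c} = #{a | g a = c} :=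
    card_equiv e.symm fun a => by simp
  simp only [IsDoublySurjective, ← e'.forall_congr_right, hfiber]

theorem card_isDoublySurjective [DecidableEq α] [Fintype β] :
    Fintype.card {g : α → β // IsDoublySurjective g} =
      dsurj (Fintype.card α) (Fintype.card β) :=
  Fintype.card_congr <| (Fintype.equivFin α).arrowCongr (Fintype.equivFin β) |>.subtypeEquiv
    fun g => (isDoublySurjective_arrowCongr_iff _ _ g).symm

end DoublySurjective

section Split

variable {α β : Type*} [Fintype α] [DecidableEq α] [Fintype β] [DecidableEq β]
  (s : Finset α) (t : Finset β)

def preimageEqEquivProdArrow :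
    {f : α → β // ∀ a, a ∈ s ↔ f a ∈ t} ≃ (s → t) × (↥sᶜ → ↥tᶜ) where
  toFun f := (fun a => ⟨f.1 a, (f.2 a).1 a.2⟩,
    fun a => ⟨f.1 a, mem_compl.2 fun h => mem_compl.1 a.2 ((f.2 a).2 h)⟩)
  invFun p := ⟨fun a => if ha : a ∈ s then p.1 ⟨a, ha⟩ else p.2 ⟨a, mem_compl.2 ha⟩,
    fun a => by
      by_cases ha : a ∈ s
      · simp [ha]
      · simpa [ha] using mem_compl.1 (p.2 ⟨a, mem_compl.2 ha⟩).2⟩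
  left_inv f := by
    ext a
    by_cases ha : a ∈ s <;> simp [ha]
  right_inv p := by
    refine Prod.ext (funext fun a => ?_) (funext fun a => ?_)
    · simp [a.2]
    · simp [mem_compl.1 a.2]

variable {s t}

theorem isDoublySurjective_preimageEqEquivProdArrow_fst_iff
    (f : {f : α → β // ∀ a, a ∈ s ↔ f a ∈ t}) :
    IsDoublySurjective (preimageEqEquivProdArrow s t f).1 ↔ ∀ c ∈ t, 2 ≤ #{a | f.1 a = c} := by
  have hfiber (c : t) : #{a | (preimageEqEquivProdArrow s t f).1 a = c} = #{a | f.1 a = c} :=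
    card_bij (fun a _ => a.1) (by simp [preimageEqEquivProdArrow, Subtype.ext_iff])
      (fun a _ b _ h => Subtype.ext h)
      (fun a ha => ⟨⟨a, (f.2 a).2 ((mem_filter.1 ha).2 ▸ c.2)⟩,
        by simpa [preimageEqEquivProdArrow, Subtype.ext_iff] using ha, rfl⟩)
  simp only [IsDoublySurjective, Subtype.forall, hfiber]

theorem injective_preimageEqEquivProdArrow_snd_iff
    (f : {f : α → β // ∀ a, a ∈ s ↔ f a ∈ t}) :
    Injective (preimageEqEquivProdArrow s t f).2 ↔ Set.InjOn f.1 ↑sᶜ :=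
  ⟨fun h a ha b hb hab => congrArg Subtype.val (@h ⟨a, ha⟩ ⟨b, hb⟩ (Subtype.ext hab)),
    fun h a b hab => Subtype.ext (h a.2 b.2 (congrArg Subtype.val hab))⟩

end Split

section Coloring

variable {k n : ℕ} {f : Fin k → Fin n} {M : Finset (Fin k)} {L : Finset (Fin n)}

theorem mem_matchingSet_iff {i : Fin k} : i ∈ matchingSet f ↔ f i ∈ repeatedColors f := by
  simp only [matchingSet, repeatedColors, mem_filter, mem_univ, true_and]
  change _ ↔ 1 < _
  simp only [one_lt_card_iff, mem_filter, mem_univ, true_and]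
  constructor
  · rintro ⟨j, hji, hj⟩
    exact ⟨j, i, hj, rfl, hji⟩
  · rintro ⟨a, b, ha, hb, hab⟩
    by_cases hai : a = i
    · exact ⟨b, fun hbi => hab (hai.trans hbi.symm), hb⟩
    · exact ⟨a, hai, ha⟩

theorem injOn_compl_matchingSet : Set.InjOn f ↑(matchingSet f)ᶜ := by
  intro i hi j _ hij
  by_contra hne
  simp only [coe_compl, Set.mem_compl_iff, mem_coe, matchingSet,
    mem_filter, mem_univ, true_and, not_exists, not_and] at hi
  exact hi j (Ne.symm hne) hij.symm

theorem matchingSet_eq_and_repeatedColors_eq_iff :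
    matchingSet f = M ∧ repeatedColors f = L ↔
      (∀ i, i ∈ M ↔ f i ∈ L) ∧ (∀ c ∈ L, 2 ≤ #{i | f i = c}) ∧ Set.InjOn f ↑Mᶜ := by
  constructor
  · rintro ⟨rfl, rfl⟩
    exact ⟨fun i => mem_matchingSet_iff, fun c hc => (mem_filter.1 hc).2,
      injOn_compl_matchingSet⟩
  rintro ⟨hf, hfiber, hinj⟩
  have hL : repeatedColors f = L := by
    ext c
    by_cases hc : c ∈ L
    · simpa [repeatedColors, hc] using hfiber c hc
    -- a color outside `L` is only used outside `M`, where `f` is injective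
    suffices #{i | f i = c} ≤ 1 by simp [repeatedColors, hc]; omega
    have hout (i : Fin k) (hi : f i = c) : i ∈ (↑Mᶜ : Set (Fin k)) :=
      mem_coe.2 <| mem_compl.2 fun hM => hc (hi ▸ (hf i).1 hM)
    refine card_le_one.2 fun i hi j hj => ?_
    simp only [mem_filter, mem_univ, true_and] at hi hj
    exact hinj (hout i hi) (hout j hj) (hi.trans hj.symm)
  refine ⟨?_, hL⟩
  ext i
  rw [mem_matchingSet_iff, hL, hf]

theorem card_matchingSet_eq_and_repeatedColors_eq (M : Finset (Fin k)) (L : Finset (Fin n)) :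
    Fintype.card {f : Fin k → Fin n // matchingSet f = M ∧ repeatedColors f = L} =
      dsurj #M #L * (n - #L).descFactorial (k - #M) := by
  let e : {f : Fin k → Fin n // matchingSet f = M ∧ repeatedColors f = L} ≃
      {g : M → L // IsDoublySurjective g} × (↥Mᶜ ↪ ↥Lᶜ) :=
    (Equiv.subtypeEquivRight fun _ => matchingSet_eq_and_repeatedColors_eq_iff).trans <|
      (Equiv.subtypeSubtypeEquivSubtypeInter _ _).symm.trans <|
      ((preimageEqEquivProdArrow M L).subtypeEquiv fun f =>
        and_congr (isDoublySurjective_preimageEqEquivProdArrow_fst_iff f).symm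
          (injective_preimageEqEquivProdArrow_snd_iff f).symm).trans <|
      Equiv.subtypeProdEquivProd.trans <|
      (Equiv.refl _).prodCongr (Equiv.subtypeInjectiveEquivEmbedding _ _)
  rw [Fintype.card_congr e, Fintype.card_prod, card_isDoublySurjective, Fintype.card_embedding_eq]
  simp only [Fintype.card_coe, card_compl, Fintype.card_fin]

theorem Z_eq_choose_mul_choose_mul_descFactorial_mul_dsurj (k n m l : ℕ) :
    Z k n m l = n.choose l * k.choose m * (n - l).descFactorial (k - m) * dsurj m l := by
  set data := fun f : Fin k → Fin n => (matchingSet f, repeatedColors f)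
  have hfiber : ∀ p ∈ (univ.powersetCard m ×ˢ univ.powersetCard l),
      #{f ∈ {f | #(matchingSet f) = m ∧ #(repeatedColors f) = l} | data f = p} =
        dsurj m l * (n - l).descFactorial (k - m) := by
    rintro ⟨M, L⟩ hp
    obtain ⟨rfl, rfl⟩ : #M = m ∧ #L = l := by
      simpa [mem_product, mem_powersetCard] using hp
    rw [← card_matchingSet_eq_and_repeatedColors_eq, Fintype.card_subtype, filter_filter]
    congr 1
    ext f
    simp only [mem_filter, mem_univ, true_and, data, Prod.ext_iff]
    constructor
    · exact And.right
    · rintro ⟨rfl, rfl⟩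
      exact ⟨⟨rfl, rfl⟩, rfl, rfl⟩
  rw [Z, Fintype.card_subtype, card_eq_sum_card_fiberwise (f := data)
      (t := univ.powersetCard m ×ˢ univ.powersetCard l) (fun f hf => by
      simpa [data, mem_powersetCard] using hf), sum_congr rfl hfiber,
    sum_const, card_product, card_powersetCard, card_powersetCard,
    card_univ, card_univ, Fintype.card_fin, Fintype.card_fin, smul_eq_mul]
  ring

end Coloring

theorem stmt8_general (k n m l : ℕ) (h3 : l + k ≤ n + m) :
    Z k n m l =
      Nat.choose n l * Nat.choose k m *
        (Nat.factorial (n - l) / Nat.factorial (n - l + m - k)) * dsurj m l := by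
  rw [Z_eq_choose_mul_choose_mul_descFactorial_mul_dsurj]
  rcases lt_or_ge k m with hkm | hmk
  · simp [Nat.choose_eq_zero_of_lt hkm]
  rcases lt_or_ge n l with hnl | hln
  · simp [Nat.choose_eq_zero_of_lt hnl]
  rw [Nat.descFactorial_eq_div (by omega), show n - l - (k - m) = n - l + m - k by omega]

/-- for `m ≥ k - n + 1`, `l ≤ ⌊m/2⌋` and `l + k ≤ n + m`
(i.e. `l ≤ n - k + m`, so that `n - l + m - k ≥ 0`),
`Z k n m l = C(n,l) · C(k,m) · ((n-l)! / (n-l+m-k)!) · s(m,l)`. -/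
theorem stmt8 (k n m l : ℕ) (h1 : k - n + 1 ≤ m) (h2 : l ≤ m / 2) (h3 : l + k ≤ n + m) :
    Z k n m l =
      Nat.choose n l * Nat.choose k m *
        (Nat.factorial (n - l) / Nat.factorial (n - l + m - k)) * dsurj m l :=
  stmt8_general k n m l h3
end

section
/- Let n, m be natural numbers with m ≥ 2 and n ≥ 1. If a function f : Fin k → Fin n has exactly m matching positions, then m ≤ k ≤ m + n - 1; moreover, the set of pairs (k, f) where k is a natural number and f : Fin k → Fin n has exactly m matching positions is finite, with cardinality ∑_{k=m}^{m+n-1} ∑_{λ=0}^{min(⌊m/2⌋, n-k+m)} Z(k,n,m,λ). -/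
open Finset

/-!
A position is matching exactly when its color is repeated. Hence the `m` matching positions
are the disjoint union of the fibres of the `λ` repeated colors, each of size at least two, so
`2λ ≤ m`; and the remaining `k - m` positions carry pairwise distinct colors that are not
repeated, so `k - m + λ ≤ n`. Since `m ≥ 1` forces `λ ≥ 1`, this gives `m ≤ k ≤ m + n - 1`, and
sorting the colorings of each length `k` by `λ` gives the double sum.
-/

variable {k n : ℕ}

@[simp]
lemma mem_matchingSet (f : Fin k → Fin n) (i : Fin k) :
    i ∈ matchingSet f ↔ ∃ j, j ≠ i ∧ f j = f i := by
  simp [matchingSet]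

@[simp]
lemma mem_repeatedColors (f : Fin k → Fin n) (c : Fin n) :
    c ∈ repeatedColors f ↔ 2 ≤ #{i | f i = c} := by
  simp [repeatedColors]

lemma mem_matchingSet_iff_mem_repeatedColors (f : Fin k → Fin n) (i : Fin k) :
    i ∈ matchingSet f ↔ f i ∈ repeatedColors f := by
  rw [mem_matchingSet, mem_repeatedColors]
  change _ ↔ 1 < _
  rw [Finset.one_lt_card]
  constructor
  · rintro ⟨j, hji, hfj⟩
    exact ⟨j, by simpa using hfj, i, by simp, hji⟩
  · rintro ⟨a, ha, b, hb, hab⟩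
    simp only [Finset.mem_filter, Finset.mem_univ, true_and] at ha hb
    by_cases hai : a = i
    · exact ⟨b, fun hbi => hab (hai.trans hbi.symm), hb⟩
    · exact ⟨a, hai, ha⟩

/-- Every repeated color contributes at least two matching positions. -/
lemma two_mul_card_repeatedColors_le (f : Fin k → Fin n) :
    2 * #(repeatedColors f) ≤ #(matchingSet f) := by
  have hfiber : ∀ c ∈ repeatedColors f, #{i ∈ matchingSet f | f i = c} = #{i | f i = c} := by
    intro c hc
    congr 1
    ext i
    simp only [Finset.mem_filter, Finset.mem_univ, true_and,
      mem_matchingSet_iff_mem_repeatedColors]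
    exact ⟨And.right, fun hi => ⟨hi ▸ hc, hi⟩⟩
  calc 2 * #(repeatedColors f) = #(repeatedColors f) • 2 := by rw [smul_eq_mul, mul_comm]
    _ ≤ ∑ c ∈ repeatedColors f, #{i | f i = c} :=
        Finset.card_nsmul_le_sum _ _ _ fun c hc => (mem_repeatedColors f c).mp hc
    _ = ∑ c ∈ repeatedColors f, #{i ∈ matchingSet f | f i = c} :=
        (Finset.sum_congr rfl hfiber).symm
    _ = #(matchingSet f) :=
        (Finset.card_eq_sum_card_fiberwise fun i hi =>
          (mem_matchingSet_iff_mem_repeatedColors f i).mp hi).symm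

/-- The non-matching positions get pairwise distinct colors, none of them repeated. -/
lemma length_add_card_repeatedColors_le (f : Fin k → Fin n) :
    k + #(repeatedColors f) ≤ n + #(matchingSet f) := by
  have hinj : Set.InjOn f ↑(matchingSet f)ᶜ := by
    intro i hi j hj hfij
    by_contra hij
    simp only [Finset.coe_compl, Set.mem_compl_iff, Finset.mem_coe, mem_matchingSet] at hi
    exact hi ⟨j, Ne.symm hij, hfij.symm⟩
  have hdisj : Disjoint ((matchingSet f)ᶜ.image f) (repeatedColors f) := by
    simp only [Finset.disjoint_left, Finset.mem_image, Finset.mem_compl]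
    rintro c ⟨i, hi, rfl⟩
    rwa [mem_matchingSet_iff_mem_repeatedColors] at hi
  have hcard := Finset.card_le_univ ((matchingSet f)ᶜ.image f ∪ repeatedColors f)
  rw [Finset.card_union_of_disjoint hdisj, Finset.card_image_of_injOn hinj,
    Finset.card_compl, Fintype.card_fin, Fintype.card_fin] at hcard
  have := Finset.card_le_univ (matchingSet f)
  rw [Fintype.card_fin] at this
  omega

lemma repeatedColors_nonempty {f : Fin k → Fin n} (h : (matchingSet f).Nonempty) :
    (repeatedColors f).Nonempty := by
  obtain ⟨i, hi⟩ := h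
  exact ⟨f i, (mem_matchingSet_iff_mem_repeatedColors f i).mp hi⟩

lemma length_mem_Icc {m : ℕ} (hm : 0 < m) {f : Fin k → Fin n} (hf : #(matchingSet f) = m) :
    k ∈ Icc m (m + n - 1) := by
  have hle := Finset.card_le_univ (matchingSet f)
  have hrep := (repeatedColors_nonempty (Finset.card_pos.mp (hf ▸ hm))).card_pos
  have := length_add_card_repeatedColors_le f
  rw [Fintype.card_fin] at hle
  rw [Finset.mem_Icc]
  omega

lemma card_repeatedColors_le_min (f : Fin k → Fin n) :
    #(repeatedColors f) ≤ min (#(matchingSet f) / 2) (n + #(matchingSet f) - k) := by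
  have := two_mul_card_repeatedColors_le f
  have := length_add_card_repeatedColors_le f
  omega

lemma card_filter_card_matchingSet_eq (m : ℕ) :
    #{f : Fin k → Fin n | #(matchingSet f) = m} =
      ∑ l ∈ range (min (m / 2) (n + m - k) + 1), Z k n m l := by
  rw [Finset.card_eq_sum_card_fiberwise (f := fun f => #(repeatedColors f))]
  · refine Finset.sum_congr rfl fun l _ => ?_
    rw [Z, Fintype.card_subtype, Finset.filter_filter]
  · intro f hf
    simp only [Finset.coe_filter, Finset.mem_univ, true_and, Set.mem_ofPred_eq] at hf
    simpa [Nat.lt_succ_iff, ← hf] using card_repeatedColors_le_min f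

theorem stmt10_general (n m : ℕ) (hm : 2 ≤ m) :
    (∀ (k : ℕ) (f : Fin k → Fin n), (matchingSet f).card = m → m ≤ k ∧ k ≤ m + n - 1) ∧
    {p : (k : ℕ) × (Fin k → Fin n) | (matchingSet p.2).card = m}.Finite ∧
    {p : (k : ℕ) × (Fin k → Fin n) | (matchingSet p.2).card = m}.ncard =
      ∑ k ∈ Finset.Icc m (m + n - 1),
        ∑ l ∈ Finset.range (min (m / 2) (n + m - k) + 1), Z k n m l := by
  have hlength : ∀ (k : ℕ) (f : Fin k → Fin n), #(matchingSet f) = m → k ∈ Icc m (m + n - 1) :=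
    fun _ _ => length_mem_Icc (by omega)
  have hset : {p : (k : ℕ) × (Fin k → Fin n) | #(matchingSet p.2) = m} =
      ↑((Icc m (m + n - 1)).sigma fun k => {f : Fin k → Fin n | #(matchingSet f) = m}) := by
    ext ⟨k, f⟩
    simpa using hlength k f
  refine ⟨fun k f hf => Finset.mem_Icc.mp (hlength k f hf), hset ▸ Finset.finite_toSet _, ?_⟩
  rw [hset, Set.ncard_coe_finset, Finset.card_sigma]
  exact Finset.sum_congr rfl fun k _ => card_filter_card_matchingSet_eq m

/-- for `n ≥ 1` and `m ≥ 2`, any coloring of `k` balls with at most `n`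
colors with exactly `m` matching positions satisfies `m ≤ k ≤ m + n - 1`; the set of
all pairs `(k, f)` with exactly `m` matching positions is finite, of cardinality
`∑_{k=m}^{m+n-1} ∑_{l=0}^{min(⌊m/2⌋, n-k+m)} Z(k,n,m,l)`. -/
theorem stmt10 (n m : ℕ) (hn : 1 ≤ n) (hm : 2 ≤ m) :
    (∀ (k : ℕ) (f : Fin k → Fin n), (matchingSet f).card = m → m ≤ k ∧ k ≤ m + n - 1) ∧
    {p : (k : ℕ) × (Fin k → Fin n) | (matchingSet p.2).card = m}.Finite ∧
    {p : (k : ℕ) × (Fin k → Fin n) | (matchingSet p.2).card = m}.ncard =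
      ∑ k ∈ Finset.Icc m (m + n - 1),
        ∑ l ∈ Finset.range (min (m / 2) (n + m - k) + 1), Z k n m l :=
  stmt10_general n m hm
end
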